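/- Let β₁, α₂, α₃, α₄, κ₂ be reals and set d₁ = 1, d₃ = 1, α₁ = β₁ − 24, κ₁ = (24α₂κ₂ + 23β₁ − (β₁−24+24α₂)β₁κ₂)/((α₃−α₄)β₁ + (α₃+α₄β₁κ₂)α₂), β₃ = ((α₃−α₄−24)β₁ − 24κ₂α₂² + (α₃+α₄β₁κ₂)α₂)/(β₁+κ₂α₂²) (assume all denominators nonzero). Then u(t,x) = ((β₁+α₂)/(4(β₁+κ₂α₂²)))(1−tanh(x−10t))², v(t,x) = (β₁(1−κ₂α₂)/(4(β₁+κ₂α₂²)))(1−tanh(x−10t))², w(t,x) = 1 − ¼(1−tanh(x−10t))² is an exact solution of the system u_t = d₁u_xx + β₁u(1−u) − α₁uw + α₂uv, v_t = v_xx + v(1−v) + (κ₁α₃+κ₂α₁)uw − (κ₂α₂u+κ₁α₄w)v, w_t = d₃w_xx + β₃w(1−w) − α₃uw + α₄vw. -/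

import Mathlib

/-!
With `T = tanh (x - 10 t)`, every component is an affine function of `(1 - T)²`, and
`tanh' = 1 - tanh²` turns its time derivative and second space derivative into polynomials
in `T`. Each equation of the system thereby becomes a polynomial identity in `T`, and the
prescribed values of `α₁`, `κ₁`, `β₃` are exactly those making the coefficients match.
-/

open Real

noncomputable def pdt (f : ℝ → ℝ → ℝ) (t x : ℝ) : ℝ := deriv (fun s => f s x) t

noncomputable def pdxx (f : ℝ → ℝ → ℝ) (t x : ℝ) : ℝ := deriv (deriv (f t)) x

/-- The rescaled language-competition system (1-4). -/
def LangSys (d₁ d₃ β₁ β₃ α₁ α₂ α₃ α₄ κ₁ κ₂ : ℝ) (u v w : ℝ → ℝ → ℝ) : Prop :=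
  ∀ t x : ℝ,
    pdt u t x = d₁ * pdxx u t x + β₁ * u t x * (1 - u t x)
        - α₁ * u t x * w t x + α₂ * u t x * v t x ∧
    pdt v t x = pdxx v t x + v t x * (1 - v t x)
        + (κ₁ * α₃ + κ₂ * α₁) * u t x * w t x
        - (κ₂ * α₂ * u t x + κ₁ * α₄ * w t x) * v t x ∧
    pdt w t x = d₃ * pdxx w t x + β₃ * w t x * (1 - w t x)
        - α₃ * u t x * w t x + α₄ * v t x * w t x

theorem Real.hasDerivAt_tanh (x : ℝ) : HasDerivAt tanh (1 - tanh x ^ 2) x := by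
  have hcosh : cosh x ≠ 0 := (cosh_pos x).ne'
  rw [show tanh = fun y => sinh y / cosh y from funext tanh_eq_sinh_div_cosh]
  refine ((hasDerivAt_sinh x).div (hasDerivAt_cosh x) hcosh).congr_deriv ?_
  field_simp

section TravelingWave

variable {f : ℝ → ℝ → ℝ} {g : ℝ → ℝ} {a b c : ℝ}

theorem pdt_of_eq_travelingWave (hf : ∀ t x, f t x = a + b * g (x - c * t)) {t x : ℝ}
    (hg : DifferentiableAt ℝ g (x - c * t)) :
    pdt f t x = -(c * b * deriv g (x - c * t)) := by
  have hξ : HasDerivAt (fun s : ℝ => x - c * s) (-c) t := by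
    simpa using ((hasDerivAt_id t).const_mul c).const_sub x
  have hwave : HasDerivAt (fun s => a + b * g (x - c * s)) (b * (deriv g (x - c * t) * -c)) t :=
    ((hg.hasDerivAt.comp t hξ).const_mul b).const_add a
  rw [pdt, funext fun s => hf s x, hwave.deriv]
  ring

theorem pdxx_of_eq_travelingWave (hf : ∀ t x, f t x = a + b * g (x - c * t)) (t x : ℝ) :
    pdxx f t x = b * deriv (deriv g) (x - c * t) := by
  have hslope : deriv (f t) = fun y => b * deriv g (y - c * t) := by
    ext y
    rw [funext (hf t), deriv_const_add, deriv_const_mul_field, deriv_comp_sub_const]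
  rw [pdxx, hslope, deriv_const_mul_field, deriv_comp_sub_const]

end TravelingWave

theorem hasDerivAt_one_sub_tanh_sq (ξ : ℝ) :
    HasDerivAt (fun ξ => (1 - tanh ξ) ^ 2) (-2 * (1 - tanh ξ) * (1 - tanh ξ ^ 2)) ξ := by
  refine (((hasDerivAt_tanh ξ).const_sub 1).fun_pow 2).congr_deriv ?_
  norm_num
  ring

theorem deriv_deriv_one_sub_tanh_sq (ξ : ℝ) :
    deriv (deriv fun ξ => (1 - tanh ξ) ^ 2) ξ
      = 2 * (1 - tanh ξ) * (1 + 3 * tanh ξ) * (1 - tanh ξ ^ 2) := by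
  rw [funext fun ξ => (hasDerivAt_one_sub_tanh_sq ξ).deriv]
  have htanh := hasDerivAt_tanh ξ
  rw [(((htanh.const_sub 1).const_mul (-2)).fun_mul ((htanh.fun_pow 2).const_sub 1)).deriv]
  ring

section TanhWave

variable {f : ℝ → ℝ → ℝ} {a b c : ℝ}

theorem pdt_of_eq_tanhWave (hf : ∀ t x, f t x = a + b * (1 - tanh (x - c * t)) ^ 2)
    (t x : ℝ) :
    pdt f t x = 2 * b * c * (1 - tanh (x - c * t)) * (1 - tanh (x - c * t) ^ 2) := by
  rw [pdt_of_eq_travelingWave (g := fun ξ => (1 - tanh ξ) ^ 2) hf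
    (hasDerivAt_one_sub_tanh_sq _).differentiableAt, (hasDerivAt_one_sub_tanh_sq _).deriv]
  ring

theorem pdxx_of_eq_tanhWave (hf : ∀ t x, f t x = a + b * (1 - tanh (x - c * t)) ^ 2)
    (t x : ℝ) :
    pdxx f t x = 2 * b * (1 - tanh (x - c * t)) * (1 + 3 * tanh (x - c * t))
      * (1 - tanh (x - c * t) ^ 2) := by
  rw [pdxx_of_eq_travelingWave (g := fun ξ => (1 - tanh ξ) ^ 2) hf, deriv_deriv_one_sub_tanh_sq]
  ring

end TanhWave

theorem exact_solution_2_6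
    (β₁ α₂ α₃ α₄ κ₂ d₁ d₃ α₁ κ₁ β₃ : ℝ)
    (hden₁ : β₁ + κ₂ * α₂ ^ 2 ≠ 0)
    (hden₂ : (α₃ - α₄) * β₁ + (α₃ + α₄ * β₁ * κ₂) * α₂ ≠ 0)
    (hd₁ : d₁ = 1) (hd₃ : d₃ = 1)
    (hα₁ : α₁ = β₁ - 24)
    (hκ₁ : κ₁ = (24 * α₂ * κ₂ + 23 * β₁ - (β₁ - 24 + 24 * α₂) * β₁ * κ₂) /
        ((α₃ - α₄) * β₁ + (α₃ + α₄ * β₁ * κ₂) * α₂))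
    (hβ₃ : β₃ = ((α₃ - α₄ - 24) * β₁ - 24 * κ₂ * α₂ ^ 2
        + (α₃ + α₄ * β₁ * κ₂) * α₂) / (β₁ + κ₂ * α₂ ^ 2)) :
    LangSys d₁ d₃ β₁ β₃ α₁ α₂ α₃ α₄ κ₁ κ₂
      (fun t x => (β₁ + α₂) / (4 * (β₁ + κ₂ * α₂ ^ 2)) *
          (1 - Real.tanh (x - 10 * t)) ^ 2)
      (fun t x => β₁ * (1 - κ₂ * α₂) / (4 * (β₁ + κ₂ * α₂ ^ 2)) *
          (1 - Real.tanh (x - 10 * t)) ^ 2)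
      (fun t x => 1 - 1 / 4 * (1 - Real.tanh (x - 10 * t)) ^ 2) := by
  intro t x
  have hkink : ∀ A t x : ℝ, A * (1 - tanh (x - 10 * t)) ^ 2
      = 0 + A * (1 - tanh (x - 10 * t)) ^ 2 :=
    fun _ _ _ => (zero_add _).symm
  have hw : ∀ t x : ℝ, 1 - 1 / 4 * (1 - tanh (x - 10 * t)) ^ 2
      = 1 + -(1 / 4) * (1 - tanh (x - 10 * t)) ^ 2 :=
    fun _ _ => by ring
  -- the denominators in the normal form `field_simp` produces
  have hden₁' : β₁ + α₂ ^ 2 * κ₂ ≠ 0 := by rwa [mul_comm] at hden₁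
  have hden₂' : β₁ * (α₃ - α₄) + α₂ * (α₃ + β₁ * κ₂ * α₄) ≠ 0 := by
    convert hden₂ using 1; ring
  subst hd₁ hd₃ hα₁ hκ₁ hβ₃
  refine ⟨?_, ?_, ?_⟩ <;>
  simp only [pdt_of_eq_tanhWave (hkink _), pdxx_of_eq_tanhWave (hkink _),
    pdt_of_eq_tanhWave hw, pdxx_of_eq_tanhWave hw] <;>
  generalize tanh (x - 10 * t) = T <;>
  field_simp <;>
  ring
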